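/- arXiv:1204.2967 — 3 statements merged into one kernel-verified Lean document; each statement's English description precedes it below -/
import Mathlib

section
/- Let G be a finitely generated subgroup of ℝ^n and set Γ = G ∩ ℤ^n (a lattice, not necessarily full rank). Then for any finite subset F ⊂ G and any ε > 0, the dual Γ* is contained in F^{*,ε} + ℤ^n. -/
def intPoints (n : ℕ) : Set (EuclideanSpace ℝ (Fin n)) :=
  {x | ∀ i, ∃ k : ℤ, x i = (k : ℝ)}

def dualSet {n : ℕ} (S : Set (EuclideanSpace ℝ (Fin n))) : Set (EuclideanSpace ℝ (Fin n)) :=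
  {x | ∀ g ∈ S, ∃ k : ℤ, (inner ℝ x g : ℝ) = (k : ℝ)}

def approxDual {n : ℕ} (S : Set (EuclideanSpace ℝ (Fin n))) (ε : ℝ) :
    Set (EuclideanSpace ℝ (Fin n)) :=
  {x | ∀ g ∈ S, ∃ k : ℤ, |(inner ℝ x g : ℝ) - (k : ℝ)| ≤ ε}

/-! Write `t = A x ∈ ℝ^F` for `A x = (⟪x, g⟫)_{g ∈ F}`; the claim is that `t` lies in the closure of
`N = A ℤⁿ + ℤ^F`. If `a` pairs integrally with `N`, then `a ∈ ℤ^F` and `∑ a_g g` pairs integrally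
with `ℤⁿ`, so `∑ a_g g ∈ Γ` and `⟪a, t⟫ = ⟪x, ∑ a_g g⟫ ∈ ℤ` for `x ∈ Γ*`: thus `t` lies in the
bidual `N**`. For any subgroup `N` of a Euclidean space, `N**` is the closure `W` of `N`:
`W = V ⊕ L` with `V` the largest subspace inside `W` and `L = W ∩ V^⊥` discrete, hence a full
lattice in its span, and such a lattice is its own bidual. -/

open Submodule Module RealInnerProductSpace Filter Topology
open LinearMap (BilinForm)

theorem abs_floor_div_mul_sub_le (r : ℝ) {δ : ℝ} (hδ : 0 < δ) :
    |⌊r / δ⌋ * δ - r| ≤ δ := by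
  have h : (⌊r / δ⌋ : ℝ) * δ - r = ((⌊r / δ⌋ : ℝ) - r / δ) * δ := by field_simp
  rw [h, abs_mul, abs_of_pos hδ]
  refine mul_le_of_le_one_left hδ.le (abs_le.2 ⟨?_, ?_⟩) <;>
    linarith [Int.sub_one_lt_floor (r / δ), Int.floor_le (r / δ)]

namespace Submodule

section linealitySpace

variable {E : Type*} [AddCommGroup E] [Module ℝ E]

def linealitySpace (W : Submodule ℤ E) : Submodule ℝ E where
  carrier := {v | ∀ r : ℝ, r • v ∈ W}
  add_mem' hv hw r := by simpa only [smul_add] using W.add_mem (hv r) (hw r)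
  zero_mem' r := by simpa only [smul_zero] using W.zero_mem
  smul_mem' c v hv r := by simpa only [smul_smul] using hv (r * c)

theorem linealitySpace_le (W : Submodule ℤ E) : W.linealitySpace.restrictScalars ℤ ≤ W :=
  fun v hv => by simpa only [one_smul] using hv 1

end linealitySpace

variable {E : Type*} [NormedAddCommGroup E] [InnerProductSpace ℝ E]

theorem mem_linealitySpace_of_tendsto {W : Submodule ℤ E} (hW : IsClosed (W : Set E))
    {u : ℕ → E} (huW : ∀ j, u j ∈ W) (hu0 : ∀ j, u j ≠ 0)
    (hu : Tendsto (fun j => ‖u j‖) atTop (𝓝 0)) {z : E}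
    (hz : Tendsto (fun j => ‖u j‖⁻¹ • u j) atTop (𝓝 z)) : z ∈ W.linealitySpace := by
  intro r
  -- `⌊r / ‖u j‖⌋ • u j ∈ W` tends to `r • z`
  have hcoef : Tendsto (fun j => (⌊r / ‖u j‖⌋ : ℝ) * ‖u j‖) atTop (𝓝 r) := by
    rw [tendsto_iff_dist_tendsto_zero]
    exact squeeze_zero (fun _ => dist_nonneg)
      (fun j => abs_floor_div_mul_sub_le r (norm_pos_iff.2 (hu0 j))) hu
  have hmul : ∀ j, (⌊r / ‖u j‖⌋ * ‖u j‖) • (‖u j‖⁻¹ • u j) = ⌊r / ‖u j‖⌋ • u j := fun j => by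
    rw [smul_smul, mul_assoc, mul_inv_cancel₀ (norm_ne_zero_iff.2 (hu0 j)), mul_one,
      Int.cast_smul_eq_zsmul]
  refine hW.mem_of_tendsto (hcoef.smul hz) (Eventually.of_forall fun j => ?_)
  rw [hmul]
  exact W.smul_mem _ (huW j)

variable [FiniteDimensional ℝ E]

theorem exists_add_mem_inf_orthogonal_linealitySpace {W : Submodule ℤ E} {w : E} (hw : w ∈ W) :
    ∃ v ∈ W.linealitySpace, ∃ l ∈ W ⊓ W.linealitySpaceᗮ.restrictScalars ℤ, v + l = w := by
  set V := W.linealitySpace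
  have hV : V.starProjection w ∈ V := V.starProjection_apply_mem w
  exact ⟨_, hV, w - V.starProjection w,
    ⟨W.sub_mem hw (W.linealitySpace_le hV), sub_starProjection_mem_orthogonal w⟩,
    add_sub_cancel _ _⟩

theorem discreteTopology_inf_orthogonal_linealitySpace {W : Submodule ℤ E}
    (hW : IsClosed (W : Set E)) :
    DiscreteTopology ↥(W ⊓ W.linealitySpaceᗮ.restrictScalars ℤ) := by
  set V := W.linealitySpace
  rw [discreteTopology_iff_isOpen_singleton_zero, Metric.isOpen_singleton_iff]
  by_contra! h
  choose u hu_lt hu_ne using fun j : ℕ => h (1 / (j + 1)) Nat.one_div_pos_of_nat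
  simp only [dist_zero_right, coe_norm, ne_eq, ← coe_eq_zero] at hu_lt hu_ne
  have hu : Tendsto (fun j => ‖(u j : E)‖) atTop (𝓝 0) :=
    squeeze_zero (fun _ => norm_nonneg _) (fun j => (hu_lt j).le)
      tendsto_one_div_add_atTop_nhds_zero_nat
  have hsphere : ∀ j, ‖(u j : E)‖⁻¹ • (u j : E) ∈ Metric.sphere (0 : E) 1 := fun j => by
    rw [mem_sphere_zero_iff_norm, norm_smul, norm_inv, norm_norm, inv_mul_cancel₀]
    exact norm_ne_zero_iff.2 (hu_ne j)
  obtain ⟨z, hz, φ, hφ, hlim⟩ := (isCompact_sphere (0 : E) 1).tendsto_subseq hsphere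
  have hzV : z ∈ V := mem_linealitySpace_of_tendsto hW (fun j => (u (φ j)).2.1)
    (fun j => hu_ne (φ j)) (hu.comp hφ.tendsto_atTop) hlim
  have hzV' : z ∈ Vᗮ := V.isClosed_orthogonal.mem_of_tendsto hlim
    (Eventually.of_forall fun j => Vᗮ.smul_mem _ (u (φ j)).2.2)
  have hz0 : z = 0 := inner_self_eq_zero.1 ((mem_orthogonal V z).1 hzV' z hzV)
  simp [hz0] at hz

end Submodule

section Dual

variable {E : Type*} [NormedAddCommGroup E] [InnerProductSpace ℝ E]

local notation "dual" => BilinForm.dualSubmodule (innerₗ E)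

theorem nondegenerate_innerₗ : (innerₗ E).Nondegenerate :=
  ⟨fun x hx => inner_self_eq_zero.1 (hx x), fun y hy => inner_self_eq_zero.1 (hy y)⟩

variable [FiniteDimensional ℝ E]

theorem IsZLattice.dualSubmodule_dualSubmodule_innerₗ (L : Submodule ℤ E) [DiscreteTopology L]
    [IsZLattice ℝ L] : dual (dual L) = L := by
  have := ZLattice.module_finite ℝ L
  have := ZLattice.module_free ℝ L
  rw [← (Free.chooseBasis ℤ L).ofZLatticeBasis_span ℝ]
  exact BilinForm.dualSubmodule_dualSubmodule_of_basis _ nondegenerate_innerₗ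
    (BilinForm.isSymm_iff.2 isSymm_inner) _

namespace Submodule

theorem mem_of_forall_dualSubmodule_inner_mem_one (L : Submodule ℤ E) [DiscreteTopology L]
    {u : E} (hu : u ∈ span ℝ (L : Set E))
    (h : ∀ a ∈ span ℝ (L : Set E), a ∈ dual L → ⟪a, u⟫ ∈ (1 : Submodule ℤ ℝ)) : u ∈ L := by
  set M := span ℝ (L : Set E)
  set L₀ := ZLattice.comap ℝ L M.subtype
  have : DiscreteTopology L₀ :=
    ZLattice.comap_discreteTopology ℝ L continuous_subtype_val Subtype.val_injective
  have : IsZLattice ℝ L₀ := ⟨span_span_coe_preimage⟩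
  have hu₀ : (⟨u, hu⟩ : M) ∈ L₀ := by
    rw [← IsZLattice.dualSubmodule_dualSubmodule_innerₗ L₀]
    intro a ha
    rw [innerₗ_apply_apply, coe_inner, real_inner_comm]
    exact h a a.2 fun l hl => ha ⟨l, subset_span hl⟩ hl
  exact hu₀

theorem mem_span_of_mem_dualSubmodule_dualSubmodule {N : Submodule ℤ E} {t : E}
    (ht : t ∈ dual (dual N)) : t ∈ span ℝ (N : Set E) := by
  rw [← (span ℝ (N : Set E)).orthogonal_orthogonal, mem_orthogonal]
  intro a ha
  have hdual : ∀ r : ℝ, r • a ∈ dual N := fun r n hn => by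
    rw [innerₗ_apply_apply, real_inner_smul_left,
      inner_left_of_mem_orthogonal (subset_span hn) ha, mul_zero]
    exact zero_mem _
  by_contra hne
  rw [real_inner_comm] at hne
  obtain ⟨k, hk⟩ := mem_one.1 (ht _ (hdual (2 * ⟪t, a⟫)⁻¹))
  rw [innerₗ_apply_apply, real_inner_smul_right, algebraMap_int_eq, eq_intCast] at hk
  have h2k : ((2 * k : ℤ) : ℝ) = (1 : ℤ) := by push_cast; rw [hk]; field_simp
  have := Int.cast_injective h2k
  omega

theorem dualSubmodule_dualSubmodule_le_topologicalClosure (N : Submodule ℤ E) :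
    dual (dual N) ≤ N.topologicalClosure := by
  intro t ht
  set W := N.topologicalClosure
  set V := W.linealitySpace
  set L := W ⊓ Vᗮ.restrictScalars ℤ
  have : DiscreteTopology L :=
    discreteTopology_inf_orthogonal_linealitySpace N.isClosed_topologicalClosure
  have hN : ∀ n ∈ N, ∃ v ∈ V, ∃ l ∈ L, v + l = n := fun n hn =>
    exists_add_mem_inf_orthogonal_linealitySpace (N.le_topologicalClosure hn)
  have hspan : span ℝ (N : Set E) ≤ V ⊔ span ℝ (L : Set E) := span_le.2 fun n hn => by
    obtain ⟨v, hv, l, hl, rfl⟩ := hN n hn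
    exact add_mem (mem_sup_left hv) (mem_sup_right (subset_span hl))
  obtain ⟨v, hv, u, hu, rfl⟩ := mem_sup.1 (hspan (mem_span_of_mem_dualSubmodule_dualSubmodule ht))
  have hLV : span ℝ (L : Set E) ≤ Vᗮ := span_le.2 fun l hl => hl.2
  have huL : u ∈ L := mem_of_forall_dualSubmodule_inner_mem_one L hu fun a ha haL => by
    have haN : a ∈ dual N := fun n hn => by
      obtain ⟨v', hv', l, hl, rfl⟩ := hN n hn
      rw [innerₗ_apply_apply, inner_add_right, inner_left_of_mem_orthogonal hv' (hLV ha),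
        zero_add]
      exact haL l hl
    have hta := ht a haN
    rwa [innerₗ_apply_apply, real_inner_comm, inner_add_right,
      inner_left_of_mem_orthogonal hv (hLV ha), zero_add] at hta
  exact W.add_mem (W.linealitySpace_le hv) huL.1

end Submodule

end Dual

namespace EuclideanSpace

variable {ι : Type*} [Fintype ι]

variable (ι) in
def intLattice : Submodule ℤ (EuclideanSpace ℝ ι) :=
  span ℤ (Set.range (EuclideanSpace.basisFun ι ℝ).toBasis)

theorem mem_intLattice_iff {x : EuclideanSpace ℝ ι} :
    x ∈ intLattice ι ↔ ∀ i, ∃ k : ℤ, x i = k := by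
  rw [intLattice, Basis.mem_span_iff_repr_mem]
  simp [eq_comm]

theorem coe_intLattice_fin (n : ℕ) : (intLattice (Fin n) : Set _) = intPoints n :=
  Set.ext fun _ => mem_intLattice_iff

theorem dualSubmodule_intLattice_le :
    BilinForm.dualSubmodule (innerₗ _) (intLattice ι) ≤ intLattice ι := fun a ha =>
  mem_intLattice_iff.2 fun i => by
    obtain ⟨k, hk⟩ := mem_one.1 (ha _ (subset_span ⟨i, rfl⟩))
    refine ⟨k, ?_⟩
    simpa using hk.symm

end EuclideanSpace

section innerPairing

variable {E : Type*} [NormedAddCommGroup E] [InnerProductSpace ℝ E] {ι : Type*} [Fintype ι]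

def innerPairing (g : ι → E) : E →ₗ[ℝ] EuclideanSpace ℝ ι where
  toFun x := WithLp.toLp 2 fun i => ⟪x, g i⟫
  map_add' x y := by ext i; simp [inner_add_left]
  map_smul' r x := by ext i; simp [real_inner_smul_left]

theorem inner_innerPairing (g : ι → E) (a : EuclideanSpace ℝ ι) (x : E) :
    ⟪a, innerPairing g x⟫ = ⟪x, ∑ i, a i • g i⟫ := by
  simp [innerPairing, PiLp.inner_apply, inner_sum, real_inner_smul_right, mul_comm]

theorem innerPairing_mem_dualSubmodule_dualSubmodule {G : AddSubgroup E} {g : ι → E}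
    (hg : ∀ i, g i ∈ G) {Λ : Submodule ℤ E} {x : E}
    (hx : ∀ γ ∈ G, γ ∈ BilinForm.dualSubmodule (innerₗ E) Λ → ⟪x, γ⟫ ∈ (1 : Submodule ℤ ℝ)) :
    innerPairing g x ∈ BilinForm.dualSubmodule (innerₗ _) (BilinForm.dualSubmodule (innerₗ _)
      (Λ.map ((innerPairing g).restrictScalars ℤ) ⊔ EuclideanSpace.intLattice ι)) := by
  intro a ha
  choose k hk using EuclideanSpace.mem_intLattice_iff.1 <|
    EuclideanSpace.dualSubmodule_intLattice_le fun c hc => ha c (mem_sup_right hc)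
  have hγG : ∑ i, a i • g i ∈ G := G.sum_mem fun i _ => by
    rw [hk i, Int.cast_smul_eq_zsmul]
    exact G.zsmul_mem (hg i) _
  have hγΛ : ∑ i, a i • g i ∈ BilinForm.dualSubmodule (innerₗ E) Λ := fun m hm => by
    rw [innerₗ_apply_apply, real_inner_comm, ← inner_innerPairing]
    exact ha _ (mem_sup_left (mem_map_of_mem hm))
  rw [innerₗ_apply_apply, real_inner_comm, inner_innerPairing]
  exact hx _ hγG hγΛ

end innerPairing

theorem mem_approxDual_of_dist_le {n : ℕ} {F : Set (EuclideanSpace ℝ (Fin n))} [Fintype F]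
    {y : EuclideanSpace ℝ (Fin n)} {c : EuclideanSpace ℝ F} (hc : c ∈ EuclideanSpace.intLattice F)
    {ε : ℝ} (h : dist (innerPairing ((↑) : F → _) y) c ≤ ε) : y ∈ approxDual F ε := by
  intro g hg
  obtain ⟨k, hk⟩ := EuclideanSpace.mem_intLattice_iff.1 hc ⟨g, hg⟩
  refine ⟨k, le_trans ?_ h⟩
  rw [dist_eq_norm, ← hk]
  simpa [innerPairing] using PiLp.norm_apply_le (innerPairing ((↑) : F → _) y - c) ⟨g, hg⟩

theorem stmt7_general {n : ℕ} (G : AddSubgroup (EuclideanSpace ℝ (Fin n)))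
    (F : Set (EuclideanSpace ℝ (Fin n))) (hF : F.Finite) (hFG : F ⊆ G)
    (ε : ℝ) (hε : 0 < ε) :
    dualSet ((G : Set _) ∩ intPoints n) ⊆
      {z | ∃ y ∈ approxDual F ε, ∃ m ∈ intPoints n, z = y + m} := by
  intro x hx
  have := hF.fintype
  set N := (EuclideanSpace.intLattice (Fin n)).map
    ((innerPairing ((↑) : F → _)).restrictScalars ℤ) ⊔ EuclideanSpace.intLattice F
  have hxN : innerPairing ((↑) : F → _) x ∈ N.topologicalClosure :=
    dualSubmodule_dualSubmodule_le_topologicalClosure N <|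
      innerPairing_mem_dualSubmodule_dualSubmodule (fun g => hFG g.2) fun γ hγG hγ => by
        obtain ⟨k, hk⟩ := hx γ
          ⟨hγG, EuclideanSpace.coe_intLattice_fin n ▸ EuclideanSpace.dualSubmodule_intLattice_le hγ⟩
        exact mem_one.2 ⟨k, by simp [hk]⟩
  obtain ⟨s, hsN, hs⟩ := Metric.mem_closure_iff.1 hxN ε hε
  obtain ⟨_, ⟨m, hm, rfl⟩, c, hc, rfl⟩ := mem_sup.1 hsN
  refine ⟨x - m, mem_approxDual_of_dist_le hc ?_, m,
    EuclideanSpace.coe_intLattice_fin n ▸ hm, by abel⟩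
  rw [map_sub, dist_eq_norm, sub_sub, ← dist_eq_norm]
  exact hs.le

/-- for a finitely generated subgroup `G ⊆ ℝⁿ` with `Γ = G ∩ ℤⁿ`,
any finite `F ⊆ G` and `ε > 0`, the dual `Γ*` is contained in `F^{*,ε} + ℤⁿ`. -/
theorem stmt7 {n : ℕ} (G : AddSubgroup (EuclideanSpace ℝ (Fin n))) (hfg : G.FG)
    (F : Set (EuclideanSpace ℝ (Fin n))) (hF : F.Finite) (hFG : F ⊆ G)
    (ε : ℝ) (hε : 0 < ε) :
    dualSet ((G : Set _) ∩ intPoints n) ⊆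
      {z | ∃ y ∈ approxDual F ε, ∃ m ∈ intPoints n, z = y + m} :=
  stmt7_general G F hF hFG ε hε
end

section
/- For any subgroup Γ of ℝ^n, the double dual satisfies Γ** = closure(Γ), the topological closure of Γ in ℝ^n. -/
open Filter Topology Submodule

theorem two_inv_ne_intCast (k : ℤ) : (2 : ℝ)⁻¹ ≠ k := by
  intro hk
  have : 2 * k = 1 := by exact_mod_cast (by rw [← hk]; norm_num : (2 : ℝ) * k = 1)
  omega

section Discrete

variable {E : Type*} [NormedAddCommGroup E] [NormedSpace ℝ E] [FiniteDimensional ℝ E]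

theorem exists_dual_intValued_of_notMem_of_mem_span (L : Submodule ℤ E) [DiscreteTopology L]
    {w : E} (hwL : w ∉ L) (hw : w ∈ span ℝ (L : Set E)) :
    ∃ f : Module.Dual ℝ E, (∀ l ∈ L, ∃ k : ℤ, f l = k) ∧ ∀ k : ℤ, f w ≠ k := by
  set U := span ℝ (L : Set E)
  let L' : Submodule ℤ U := ZLattice.comap ℝ L U.subtype
  have : DiscreteTopology L' :=
    ZLattice.comap_discreteTopology ℝ L continuous_subtype_val U.injective_subtype
  have : IsZLattice ℝ L' := ⟨span_span_coe_preimage⟩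
  let B := (Module.Free.chooseBasis ℤ L').ofZLatticeBasis ℝ L'
  have hmem : ∀ u : U, (u : E) ∈ L ↔ ∀ i, B.repr u i ∈ Set.range (algebraMap ℤ ℝ) := fun u => by
    rw [← B.mem_span_iff_repr_mem ℤ, Module.Basis.ofZLatticeBasis_span]
    rfl
  obtain ⟨i, hi⟩ : ∃ i, B.repr ⟨w, hw⟩ i ∉ Set.range (algebraMap ℤ ℝ) := by
    simpa using mt (hmem ⟨w, hw⟩).2 hwL
  obtain ⟨f, hf⟩ := LinearMap.exists_extend (B.coord i)
  have hfU : ∀ u : U, f u = B.repr u i := fun u => LinearMap.congr_fun hf u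
  refine ⟨f, fun l hl => ?_, fun k hk => hi ⟨k, ?_⟩⟩
  · obtain ⟨k, hk⟩ := (hmem ⟨l, subset_span hl⟩).1 hl i
    exact ⟨k, (hfU ⟨l, subset_span hl⟩).trans hk.symm⟩
  · rw [← hfU]
    exact hk.symm

theorem exists_dual_intValued_of_notMem_of_discreteTopology (L : Submodule ℤ E)
    [DiscreteTopology L] {w : E} (hw : w ∉ L) :
    ∃ f : Module.Dual ℝ E, (∀ l ∈ L, ∃ k : ℤ, f l = k) ∧ ∀ k : ℤ, f w ≠ k := by
  by_cases hspan : w ∈ span ℝ (L : Set E)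
  · exact exists_dual_intValued_of_notMem_of_mem_span L hw hspan
  obtain ⟨f, hfw, hfL⟩ := exists_dual_map_eq_bot_of_notMem hspan inferInstance
  refine ⟨(2 * f w)⁻¹ • f, fun l hl => ⟨0, ?_⟩, fun k hk => two_inv_ne_intCast k ?_⟩
  · have hfl : f l = 0 := (mem_bot ℝ).1 (hfL ▸ mem_map_of_mem (subset_span hl))
    simp [hfl]
  · rw [← hk, LinearMap.smul_apply, smul_eq_mul]
    field_simp

end Discrete

theorem tendsto_floor_div_mul_nhdsGT_zero (t : ℝ) :
    Tendsto (fun r : ℝ => (⌊t / r⌋ : ℝ) * r) (𝓝[>] 0) (𝓝 t) := by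
  have hfract : Tendsto (fun r : ℝ => Int.fract (t / r) * r) (𝓝[>] 0) (𝓝 0) := by
    refine squeeze_zero' ?_ ?_ (tendsto_nhdsWithin_of_tendsto_nhds tendsto_id)
    · filter_upwards [self_mem_nhdsWithin] with r hr
      exact mul_nonneg (Int.fract_nonneg _) (le_of_lt hr)
    · filter_upwards [self_mem_nhdsWithin] with r hr
      exact mul_le_of_le_one_left (le_of_lt hr) (Int.fract_lt_one _).le
  have hsub := (tendsto_const_nhds (x := t)).sub hfract
  rw [sub_zero] at hsub
  refine hsub.congr' ?_
  filter_upwards [self_mem_nhdsWithin] with r (hr : 0 < r)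
  rw [Int.fract, sub_mul, div_mul_cancel₀ _ hr.ne']
  ring

namespace AddSubgroup

section Module

variable {E : Type*} [AddCommGroup E] [Module ℝ E]

def linealitySpace (H : AddSubgroup E) : Submodule ℝ E where
  carrier := {v | ∀ t : ℝ, t • v ∈ H}
  add_mem' hv hw t := by simpa only [smul_add] using H.add_mem (hv t) (hw t)
  zero_mem' t := by simpa only [smul_zero] using H.zero_mem
  smul_mem' c v hv t := by simpa only [smul_smul] using hv (t * c)

theorem mem_of_mem_linealitySpace {H : AddSubgroup E} {v : E} (hv : v ∈ H.linealitySpace) :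
    v ∈ H := by
  simpa using hv 1

end Module

variable {E : Type*} [NormedAddCommGroup E] [NormedSpace ℝ E]

theorem mem_linealitySpace_of_tendsto {H : AddSubgroup E} (hH : IsClosed (H : Set E))
    {ι : Type*} {l : Filter ι} [l.NeBot] {z : ι → E} {a : E} (hzH : ∀ i, z i ∈ H)
    (hz : Tendsto (fun i => ‖z i‖) l (𝓝[>] 0))
    (ha : Tendsto (fun i => ‖z i‖⁻¹ • z i) l (𝓝 a)) : a ∈ H.linealitySpace := by
  intro t
  have hlim : Tendsto (fun i => ((⌊t / ‖z i‖⌋ : ℝ) * ‖z i‖) • (‖z i‖⁻¹ • z i)) l (𝓝 (t • a)) :=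
    ((tendsto_floor_div_mul_nhdsGT_zero t).comp hz).smul ha
  refine hH.mem_of_tendsto hlim ?_
  filter_upwards [hz.eventually self_mem_nhdsWithin] with i (hi : 0 < ‖z i‖)
  rw [smul_smul, mul_assoc, mul_inv_cancel₀ hi.ne', mul_one, Int.cast_smul_eq_zsmul]
  exact H.zsmul_mem (hzH i) _

theorem exists_le_norm_of_disjoint_linealitySpace [FiniteDimensional ℝ E] {H : AddSubgroup E}
    (hH : IsClosed (H : Set E)) {W : Submodule ℝ E} (hW : Disjoint W H.linealitySpace) :
    ∃ ε > 0, ∀ z ∈ H, z ∈ W → z ≠ 0 → ε ≤ ‖z‖ := by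
  by_contra! hsmall
  choose z hzH hzW hz0 hzε using fun k : ℕ => hsmall (1 / (k + 1)) (by positivity)
  have hu : ∀ k, ‖z k‖⁻¹ • z k ∈ Metric.sphere (0 : E) 1 := fun k => by
    simpa using norm_smul_inv_norm (𝕜 := ℝ) (hz0 k)
  obtain ⟨a, ha, φ, hφ, hlim⟩ := (isCompact_sphere (0 : E) 1).tendsto_subseq hu
  have hnorm : Tendsto (fun k => ‖z (φ k)‖) atTop (𝓝[>] 0) := by
    refine tendsto_nhdsWithin_iff.mpr ⟨?_, .of_forall fun k => norm_pos_iff.mpr (hz0 _)⟩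
    exact squeeze_zero (fun _ => norm_nonneg _) (fun k => (hzε (φ k)).le)
      (tendsto_one_div_add_atTop_nhds_zero_nat.comp hφ.tendsto_atTop)
  have haW : a ∈ W := W.closed_of_finiteDimensional.mem_of_tendsto hlim
    (.of_forall fun k => W.smul_mem _ (hzW _))
  have haV := mem_linealitySpace_of_tendsto hH (fun k => hzH (φ k)) hnorm hlim
  have : a = 0 := (Submodule.disjoint_def.mp hW) a haW haV
  simp [this] at ha

theorem exists_dual_intValued_of_notMem_of_isClosed [FiniteDimensional ℝ E] {H : AddSubgroup E}
    (hH : IsClosed (H : Set E)) {x : E} (hx : x ∉ H) :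
    ∃ f : Module.Dual ℝ E, (∀ h ∈ H, ∃ k : ℤ, f h = k) ∧ ∀ k : ℤ, f x ≠ k := by
  obtain ⟨W, hW⟩ := H.linealitySpace.exists_isCompl
  let P := W.projection H.linealitySpace hW.symm
  have hPH : ∀ v, P v ∈ H ↔ v ∈ H := fun v => by
    rw [← H.add_mem_cancel_right (mem_of_mem_linealitySpace (sub_projection_mem hW.symm v)),
      add_sub_cancel]
  let L := (H ⊓ W.toAddSubgroup).toIntSubmodule
  obtain ⟨ε, hε, hsep⟩ := exists_le_norm_of_disjoint_linealitySpace hH hW.symm.disjoint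
  have : DiscreteTopology L :=
    .of_forall_le_norm hε fun z hz => hsep z z.2.1 z.2.2 (by simpa using hz)
  obtain ⟨f, hfL, hfx⟩ :=
    exists_dual_intValued_of_notMem_of_discreteTopology L (w := P x) fun hPx => hx ((hPH x).1 hPx.1)
  exact ⟨f ∘ₗ P, fun h hh => hfL _ ⟨(hPH h).2 hh, projection_apply_mem _ h⟩, hfx⟩

end AddSubgroup

theorem isClosed_dualSet {n : ℕ} (S : Set (EuclideanSpace ℝ (Fin n))) : IsClosed (dualSet S) := by
  have : dualSet S = ⋂ g ∈ S, (fun x => inner ℝ x g) ⁻¹' Set.range ((↑) : ℤ → ℝ) := by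
    ext
    simp [dualSet, eq_comm]
  rw [this]
  exact isClosed_biInter fun g _ =>
    Int.isClosedEmbedding_coe_real.isClosed_range.preimage (continuous_id.inner continuous_const)

theorem subset_dualSet_dualSet {n : ℕ} (S : Set (EuclideanSpace ℝ (Fin n))) :
    S ⊆ dualSet (dualSet S) := fun x hx y hy => by
  simpa only [real_inner_comm] using hy x hx

/-- for any subgroup `Γ ⊆ ℝⁿ`, the double dual `Γ**` equals the
topological closure of `Γ`. -/
theorem stmt10 {n : ℕ} (Γ : AddSubgroup (EuclideanSpace ℝ (Fin n))) :
    dualSet (dualSet (Γ : Set _)) = closure (Γ : Set (EuclideanSpace ℝ (Fin n))) := by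
  refine subset_antisymm (fun x hx => ?_)
    (closure_minimal (subset_dualSet_dualSet _) (isClosed_dualSet _))
  by_contra hxΓ
  rw [← Γ.topologicalClosure_coe] at hxΓ
  obtain ⟨f, hfΓ, hfx⟩ :=
    Γ.topologicalClosure.exists_dual_intValued_of_notMem_of_isClosed
      Γ.isClosed_topologicalClosure hxΓ
  set y := (InnerProductSpace.toDual ℝ _).symm (LinearMap.toContinuousLinearMap f)
  have hy : ∀ v, inner ℝ y v = f v := fun v => InnerProductSpace.toDual_symm_apply
  obtain ⟨k, hk⟩ := hx y fun g hg => by simpa only [hy] using hfΓ g (Γ.le_topologicalClosure hg)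
  exact hfx k (by rw [← hy, real_inner_comm, hk])
end

section
/- Let V ⊂ L²(ℝ^n) be the principal shift-invariant space generated by φ with respect to ℤ^n-translations, i.e., V = {f ∈ L² : f̂(ξ) = m(ξ)φ̂(ξ) a.e. for some measurable ℤ^n-periodic m}, and let Λ ⊇ ℤ^n be a full rank lattice. Then V is invariant under all translations by elements of Λ if and only if |K ∩ (k + K)| = 0 for all k ∈ ℤ^n \ Λ*, where K = supp φ̂ and |·| denotes Lebesgue measure. -/
open MeasureTheory

/-- Full rank lattice. -/
def IsFullLattice {n : ℕ} (L : AddSubgroup (EuclideanSpace ℝ (Fin n))) : Prop :=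
  ∃ b : Module.Basis (Fin n) ℝ (EuclideanSpace ℝ (Fin n)),
    L = AddSubgroup.closure (Set.range b)

/-- The principal shift-invariant space generated by `φ`, described on the Fourier
side: the set of (Fourier transforms of) its elements, i.e. `L²` functions of the
form `m · φ̂` with `m` measurable and `ℤⁿ`-periodic. -/
def hatPSI {n : ℕ} (φhat : EuclideanSpace ℝ (Fin n) → ℂ) :
    Set (EuclideanSpace ℝ (Fin n) → ℂ) :=
  {F | MemLp F 2 (volume : Measure (EuclideanSpace ℝ (Fin n))) ∧
    ∃ m : EuclideanSpace ℝ (Fin n) → ℂ, Measurable m ∧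
      (∀ k ∈ intPoints n, ∀ ξ, m (ξ + k) = m ξ) ∧
      F =ᵐ[volume] fun ξ => m ξ * φhat ξ}

/-- On the Fourier side, translation of `f` by `y` acts on `f̂` as multiplication by
the character `ξ ↦ e^{-2πi⟨y,ξ⟩}`. -/
noncomputable def modulate {n : ℕ} (y : EuclideanSpace ℝ (Fin n))
    (F : EuclideanSpace ℝ (Fin n) → ℂ) : EuclideanSpace ℝ (Fin n) → ℂ :=
  fun ξ => Complex.exp (-(2 * Real.pi * Complex.I * ((inner ℝ y ξ : ℝ) : ℂ))) * F ξ

/-! Translation by `y` multiplies `f̂` by the character `e_y(ξ) = e^{-2πi⟨y,ξ⟩}`, so `V` is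
invariant under `y` iff `e_y` agrees a.e. on `K = supp φ̂` with a measurable `ℤⁿ`-periodic
function. As `e_y(ξ + k) = e_y(ξ)` iff `⟨k, y⟩ ∈ ℤ`, this fails as soon as `K ∩ (k + K)` has
positive measure for some `k ∈ ℤⁿ` with `⟨k, y⟩ ∉ ℤ`. Conversely, once these countably many null
sets are removed from `K`, the restriction of `e_y` to what is left extends to a measurable
periodic function: on each coset `ξ + ℤⁿ` take the value of `e_y` at any of its points in `K`. -/

open Complex
open scoped Real

theorem exists_measurable_periodic_eqOn {E β : Type*} [AddGroup E] [MeasurableSpace E]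
    [MeasurableAdd E] [MeasurableSpace β] [Zero β] {Γ : AddSubgroup E}
    (hΓ : (Γ : Set E).Countable) {S : Set E} (hS : MeasurableSet S) {g : E → β}
    (hg : Measurable g) (hgS : ∀ ξ ∈ S, ∀ γ ∈ Γ, ξ + γ ∈ S → g (ξ + γ) = g ξ) :
    ∃ m : E → β, Measurable m ∧ (∀ γ ∈ Γ, ∀ ξ, m (ξ + γ) = m ξ) ∧ Set.EqOn m g S := by
  classical
  obtain ⟨e, he⟩ := hΓ.exists_eq_range ⟨0, Γ.zero_mem⟩
  have he_mem (j : ℕ) : e j ∈ Γ := by rw [← SetLike.mem_coe, he]; exact ⟨j, rfl⟩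
  have he_surj {γ : E} (hγ : γ ∈ Γ) : ∃ j, e j = γ := by rwa [← SetLike.mem_coe, he] at hγ
  let q (j : ℕ) (ξ : E) : Prop := ξ + e j ∈ S
  have hq (j : ℕ) : MeasurableSet {ξ | q j ξ} := measurable_add_const (e j) hS
  have hp (ξ : E) : ∃ j, q j ξ ∨ ∀ i, ¬ q i ξ := by
    by_cases h : ∃ j, q j ξ
    · exact h.imp fun _ => Or.inl
    · exact ⟨0, Or.inr (not_exists.mp h)⟩
  -- `m ξ` is `g` at the first point of `ξ + Γ` (in the enumeration `e`) lying in `S`, else `0`.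
  let f (j : ℕ) (ξ : E) : β := if q j ξ then g (ξ + e j) else 0
  let m (ξ : E) : β := f (Nat.find (hp ξ)) ξ
  have hm_meas : Measurable m := by
    refine Measurable.find (fun j => Measurable.ite (hq j) (hg.comp (measurable_add_const _))
      measurable_const) (fun j => ?_) hp
    have : {ξ | q j ξ ∨ ∀ i, ¬ q i ξ} = {ξ | q j ξ} ∪ ⋂ i, {ξ | q i ξ}ᶜ := by
      ext ξ; simp [Set.mem_iInter]
    rw [this]
    exact (hq j).union (MeasurableSet.iInter fun i => (hq i).compl)
  have hm_eq {ξ γ : E} (hγ : γ ∈ Γ) (hξγ : ξ + γ ∈ S) : m ξ = g (ξ + γ) := by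
    obtain ⟨i, rfl⟩ := he_surj hγ
    have hj : q (Nat.find (hp ξ)) ξ :=
      (Nat.find_spec (hp ξ)).resolve_right fun h => h i hξγ
    simp only [m, f, if_pos hj]
    set j := Nat.find (hp ξ)
    have := hgS _ hj (-e j + e i) (Γ.add_mem (Γ.neg_mem (he_mem j)) (he_mem i))
    simp only [← add_assoc, add_neg_cancel_right] at this
    exact (this hξγ).symm
  have hm_zero {ξ : E} (h : ∀ γ ∈ Γ, ξ + γ ∉ S) : m ξ = 0 :=
    if_neg (h _ (he_mem _))
  refine ⟨m, hm_meas, fun γ hγ ξ => ?_, fun ξ hξ => ?_⟩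
  · by_cases h : ∃ δ ∈ Γ, ξ + δ ∈ S
    · obtain ⟨δ, hδ, hξδ⟩ := h
      have hξγδ : ξ + γ + (-γ + δ) = ξ + δ := by rw [add_assoc, add_neg_cancel_left]
      rw [hm_eq hδ hξδ, hm_eq (Γ.add_mem (Γ.neg_mem hγ) hδ) (hξγδ ▸ hξδ), hξγδ]
    · push Not at h
      rw [hm_zero h, hm_zero fun δ hδ => by rw [add_assoc]; exact h _ (Γ.add_mem hγ hδ)]
  · rw [hm_eq Γ.zero_mem (by rwa [add_zero]), add_zero]

section
variable {n : ℕ}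

def intLattice (n : ℕ) : AddSubgroup (EuclideanSpace ℝ (Fin n)) where
  carrier := intPoints n
  zero_mem' i := ⟨0, by simp⟩
  add_mem' hx hy i := by
    obtain ⟨a, ha⟩ := hx i
    obtain ⟨b, hb⟩ := hy i
    exact ⟨a + b, by simp [ha, hb]⟩
  neg_mem' hx i := by
    obtain ⟨a, ha⟩ := hx i
    exact ⟨-a, by simp [ha]⟩

theorem intPoints_countable (n : ℕ) : (intPoints n).Countable := by
  refine (Set.countable_range fun v : Fin n → ℤ => WithLp.toLp 2 fun i => (v i : ℝ)).mono ?_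
  intro x hx
  choose k hk using hx
  exact ⟨k, by ext i; simp [hk]⟩

noncomputable def character (y ξ : EuclideanSpace ℝ (Fin n)) : ℂ :=
  exp (-(2 * π * I * (inner ℝ y ξ : ℂ)))

theorem modulate_eq_character_mul (y : EuclideanSpace ℝ (Fin n))
    (F : EuclideanSpace ℝ (Fin n) → ℂ) : modulate y F = character y * F := rfl

theorem continuous_character (y : EuclideanSpace ℝ (Fin n)) : Continuous (character y) := by
  unfold character; fun_prop

theorem norm_character (y ξ : EuclideanSpace ℝ (Fin n)) : ‖character y ξ‖ = 1 := by
  simp [character, norm_exp]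

theorem character_ne_zero (y ξ : EuclideanSpace ℝ (Fin n)) : character y ξ ≠ 0 :=
  exp_ne_zero _

theorem character_add (y ξ d : EuclideanSpace ℝ (Fin n)) :
    character y (ξ + d) = character y d * character y ξ := by
  rw [character, character, character, ← exp_add]
  congr 1
  push_cast [inner_add_right]
  ring

theorem character_eq_one_iff (y d : EuclideanSpace ℝ (Fin n)) :
    character y d = 1 ↔ ∃ j : ℤ, inner ℝ d y = (j : ℝ) := by
  rw [character, exp_eq_one_iff, real_inner_comm]
  constructor
  · rintro ⟨j, hj⟩
    refine ⟨-j, ?_⟩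
    have h : 2 * π * I * (inner ℝ d y : ℂ) = 2 * π * I * ((-j : ℤ) : ℂ) := by
      push_cast; linear_combination -hj
    exact_mod_cast mul_left_cancel₀ two_pi_I_ne_zero h
  · rintro ⟨j, hj⟩
    exact ⟨-j, by rw [hj]; push_cast; ring⟩

theorem character_add_eq_iff (y ξ d : EuclideanSpace ℝ (Fin n)) :
    character y (ξ + d) = character y ξ ↔ ∃ j : ℤ, inner ℝ d y = (j : ℝ) := by
  rw [character_add, mul_eq_right₀ (character_ne_zero y ξ), character_eq_one_iff]

theorem memLp_modulate {p : ENNReal} {μ : Measure (EuclideanSpace ℝ (Fin n))}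
    (y : EuclideanSpace ℝ (Fin n)) {F : EuclideanSpace ℝ (Fin n) → ℂ} (hF : MemLp F p μ) :
    MemLp (modulate y F) p μ :=
  hF.of_le ((continuous_character y).aestronglyMeasurable.mul hF.1) <| ae_of_all _ fun ξ => by
    rw [modulate_eq_character_mul, Pi.mul_apply, norm_mul, norm_character, one_mul]

theorem volume_support_inter_image_eq_zero_of_modulate_mem {φhat : EuclideanSpace ℝ (Fin n) → ℂ}
    {y k : EuclideanSpace ℝ (Fin n)} (hy : modulate y φhat ∈ hatPSI φhat)
    (hk : k ∈ intPoints n) (hky : ¬∃ j : ℤ, inner ℝ k y = (j : ℝ)) :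
    volume (Function.support φhat ∩ (k + ·) '' Function.support φhat) = 0 := by
  obtain ⟨-, m, -, hm_per, hm⟩ := hy
  set A := {ξ | modulate y φhat ξ ≠ m ξ * φhat ξ}
  have hA : volume A = 0 := ae_iff.mp hm
  have hkA : volume ((k + ·) '' A) = 0 := by
    rw [Set.image_add_left, measure_preimage_add]; exact hA
  have hcharacter {ζ} (hζA : ζ ∉ A) (hζ : φhat ζ ≠ 0) : character y ζ = m ζ :=
    mul_right_cancel₀ hζ (not_not.mp hζA)
  refine measure_mono_null ?_ (measure_union_null hA hkA)
  rintro _ ⟨hkη, η, hη, rfl⟩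
  by_contra hbad
  obtain ⟨hkηA, hηA⟩ := not_or.mp hbad
  have hηA' : η ∉ A := fun h => hηA ⟨η, h, rfl⟩
  apply hky
  rw [← character_add_eq_iff y η, add_comm η k, hcharacter hkηA hkη, hcharacter hηA' hη]
  simpa only [add_comm η k] using hm_per k hk η

theorem modulate_mem_hatPSI {φhat : EuclideanSpace ℝ (Fin n) → ℂ} (hφ : Measurable φhat)
    {y : EuclideanSpace ℝ (Fin n)}
    (hy : ∀ k ∈ intPoints n, (¬∃ j : ℤ, inner ℝ k y = (j : ℝ)) →
      volume (Function.support φhat ∩ (k + ·) '' Function.support φhat) = 0)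
    {F : EuclideanSpace ℝ (Fin n) → ℂ} (hF : F ∈ hatPSI φhat) : modulate y F ∈ hatPSI φhat := by
  obtain ⟨hF2, m, hm_meas, hm_per, hFm⟩ := hF
  set K := Function.support φhat
  set D := {k ∈ intPoints n | ¬∃ j : ℤ, inner ℝ k y = (j : ℝ)}
  set N := ⋃ k ∈ D, K ∩ (k + ·) '' K
  have hD : D.Countable := (intPoints_countable n).mono (Set.sep_subset _ _)
  have hK : MeasurableSet K := measurableSet_support hφ
  have hN_null : volume N = 0 := (measure_biUnion_null_iff hD).2 fun k hk => hy k hk.1 hk.2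
  have hN : MeasurableSet N := MeasurableSet.biUnion hD fun k _ =>
    hK.inter (by rw [Set.image_add_left]; exact measurable_const_add _ hK)
  have hKN_dual : ∀ ξ ∈ K \ N, ∀ d ∈ intLattice n, ξ + d ∈ K \ N →
      ∃ j : ℤ, inner ℝ d y = (j : ℝ) := by
    intro ξ hξ d hd hξd
    by_contra h
    exact hξd.2 (Set.mem_biUnion ⟨hd, h⟩ ⟨hξd.1, ξ, hξ.1, add_comm _ _⟩)
  obtain ⟨m', hm'_meas, hm'_per, hm'_eq⟩ := exists_measurable_periodic_eqOn (Γ := intLattice n)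
    (intPoints_countable n) (hK.diff hN) ((continuous_character y).measurable.mul hm_meas)
    fun ξ hξ d hd hξd => by
      simp only [Pi.mul_apply, (character_add_eq_iff y ξ d).2 (hKN_dual ξ hξ d hd hξd),
        hm_per d hd]
  refine ⟨memLp_modulate y hF2, m', hm'_meas, hm'_per, ?_⟩
  filter_upwards [hFm, measure_eq_zero_iff_ae_notMem.mp hN_null] with ξ hFξ hξN
  rw [modulate_eq_character_mul, Pi.mul_apply, hFξ]
  by_cases hξK : φhat ξ = 0
  · simp [hξK]
  · rw [hm'_eq ⟨hξK, hξN⟩, Pi.mul_apply, mul_assoc]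

end

theorem stmt16_general {n : ℕ} (φhat : EuclideanSpace ℝ (Fin n) → ℂ)
    (hmeas : Measurable φhat)
    (hφ : MemLp φhat 2 (volume : Measure (EuclideanSpace ℝ (Fin n))))
    (Λ : AddSubgroup (EuclideanSpace ℝ (Fin n))) :
    (∀ lam ∈ Λ, ∀ F ∈ hatPSI φhat, modulate lam F ∈ hatPSI φhat) ↔
      ∀ k ∈ intPoints n \ dualSet (Λ : Set (EuclideanSpace ℝ (Fin n))),
        volume ({ξ | φhat ξ ≠ 0} ∩ ((fun ξ => k + ξ) '' {ξ | φhat ξ ≠ 0})) = 0 := by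
  have hφ_mem : φhat ∈ hatPSI φhat := ⟨hφ, 1, measurable_const, fun _ _ _ => rfl, by simp⟩
  constructor
  · rintro H k ⟨hk, hkΛ⟩
    obtain ⟨y, hy, hky⟩ : ∃ y ∈ Λ, ¬∃ j : ℤ, inner ℝ k y = (j : ℝ) := by
      simpa [dualSet] using hkΛ
    exact volume_support_inter_image_eq_zero_of_modulate_mem (H y hy φhat hφ_mem) hk hky
  · intro H y hy F hF
    exact modulate_mem_hatPSI hmeas (fun k hk hky => H k ⟨hk, fun hkΛ => hky (hkΛ y hy)⟩) hF

/-- the principal `ℤⁿ`-SI space generated by `φ` is invariant under all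
translations by `Λ ⊇ ℤⁿ` iff `|K ∩ (k + K)| = 0` for all `k ∈ ℤⁿ \ Λ*`,
where `K = supp φ̂`. -/
theorem stmt16 {n : ℕ} (φhat : EuclideanSpace ℝ (Fin n) → ℂ)
    (hmeas : Measurable φhat)
    (hφ : MemLp φhat 2 (volume : Measure (EuclideanSpace ℝ (Fin n))))
    (Λ : AddSubgroup (EuclideanSpace ℝ (Fin n))) (hΛ : IsFullLattice Λ)
    (hZΛ : intPoints n ⊆ (Λ : Set (EuclideanSpace ℝ (Fin n)))) :
    (∀ lam ∈ Λ, ∀ F ∈ hatPSI φhat, modulate lam F ∈ hatPSI φhat) ↔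
      ∀ k ∈ intPoints n \ dualSet (Λ : Set (EuclideanSpace ℝ (Fin n))),
        volume ({ξ | φhat ξ ≠ 0} ∩ ((fun ξ => k + ξ) '' {ξ | φhat ξ ≠ 0})) = 0 :=
  stmt16_general φhat hmeas hφ Λ
end
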